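/- If J ∈ End(W ⊕ W*) satisfies J² = −Id and g(𝒳, J𝒴) + g(J𝒳, 𝒴) = 0 for all 𝒳,𝒴, then the dimension of W is even. -/

import Mathlib

/-!
Let `G` be the Gram matrix of `g` in some basis and `M` the matrix of `J`. As `J² = -1`, `J` has
no real eigenvalue, so `det (-M) > 0`. Skew-symmetry of `J` makes `G * M` a skew-symmetric
matrix, which has no nonzero real eigenvalue, so `det (-(G * M)) ≥ 0`. Both signs follow from
`t ↦ det (t - A)` being positive for large `t` and not vanishing on `(0, ∞)`. Hence `det G ≥ 0`.
But `g` has signature `(n, n)` with `n = dim W`, so `det G` has the sign of `(-1)ⁿ`, and `n` is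
even.
-/

/-- The neutral metric `g((X,α),(Y,μ)) = (α(Y) + μ(X))/2` on `W ⊕ W*`. -/
noncomputable def neutralMetric (W : Type*) [AddCommGroup W] [Module ℝ W] :
    (W × Module.Dual ℝ W) → (W × Module.Dual ℝ W) → ℝ :=
  fun p q => (p.2 q.1 + q.2 p.1) / 2

open Filter Topology Matrix

namespace Matrix

variable {m : Type*} [Fintype m]

theorem eq_zero_of_mulVec_eq_smul_of_transpose_eq_neg {S : Matrix m m ℝ} (hS : Sᵀ = -S)
    {t : ℝ} (ht : t ≠ 0) {v : m → ℝ} (hv : S *ᵥ v = t • v) : v = 0 := by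
  have h₁ : v ⬝ᵥ S *ᵥ v = t * (v ⬝ᵥ v) := by rw [hv, dotProduct_smul, smul_eq_mul]
  have h₂ : v ⬝ᵥ S *ᵥ v = -(t * (v ⬝ᵥ v)) := by
    rw [dotProduct_mulVec, ← mulVec_transpose, hS, neg_mulVec, hv, neg_dotProduct,
      smul_dotProduct, smul_eq_mul]
  have : t * (v ⬝ᵥ v) = 0 := by linarith
  exact dotProduct_self_eq_zero.mp ((mul_eq_zero.mp this).resolve_left ht)

variable [DecidableEq m]

theorem eventually_pos_det_smul_one_sub (M : Matrix m m ℝ) :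
    ∀ᶠ t : ℝ in atTop, 0 < (t • (1 : Matrix m m ℝ) - M).det := by
  have hlim : Tendsto (fun t : ℝ => ((1 : Matrix m m ℝ) - t⁻¹ • M).det) atTop (𝓝 1) := by
    have hc : Continuous fun s : ℝ => ((1 : Matrix m m ℝ) - s • M).det :=
      (continuous_const.sub (continuous_id.smul continuous_const)).matrix_det
    simpa [Function.comp_def] using (hc.tendsto 0).comp tendsto_inv_atTop_zero
  filter_upwards [hlim.eventually (eventually_gt_nhds one_pos), eventually_gt_atTop 0]
    with t h1 ht
  have : t • (1 : Matrix m m ℝ) - M = t • (1 - t⁻¹ • M) := by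
    rw [smul_sub, smul_smul, mul_inv_cancel₀ ht.ne', one_smul]
  rw [this, det_smul]
  positivity

theorem det_smul_one_sub_ne_zero {M : Matrix m m ℝ} {t : ℝ}
    (h : ∀ v, M *ᵥ v = t • v → v = 0) : (t • (1 : Matrix m m ℝ) - M).det ≠ 0 := by
  intro hdet
  obtain ⟨v, hv, hMv⟩ := exists_mulVec_eq_zero_iff.mpr hdet
  rw [sub_mulVec, smul_mulVec, one_mulVec, sub_eq_zero] at hMv
  exact hv (h v hMv.symm)

theorem det_neg_nonneg_of_forall_pos_mulVec_eq_smul (M : Matrix m m ℝ)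
    (h : ∀ t : ℝ, 0 < t → ∀ v, M *ᵥ v = t • v → v = 0) : 0 ≤ (-M).det := by
  set f := fun t : ℝ => (t • (1 : Matrix m m ℝ) - M).det
  have hf : Continuous f := ((continuous_id.smul continuous_const).sub continuous_const).matrix_det
  have hpos : ∀ t, 0 < t → 0 < f t := by
    intro t ht
    refine (det_smul_one_sub_ne_zero (h t ht)).lt_or_gt.resolve_left fun hneg => ?_
    obtain ⟨u, hu, htu⟩ := ((eventually_pos_det_smul_one_sub M).and (eventually_ge_atTop t)).exists
    obtain ⟨s, hs, hfs⟩ := intermediate_value_Icc htu hf.continuousOn ⟨hneg.le, hu.le⟩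
    exact det_smul_one_sub_ne_zero (h s (ht.trans_le hs.1)) hfs
  have : 0 ≤ f 0 := ge_of_tendsto ((hf.tendsto 0).mono_left nhdsWithin_le_nhds)
    (eventually_nhdsWithin_of_forall (s := Set.Ioi 0) fun t ht => (hpos t ht).le)
  simpa [f] using this

theorem det_neg_pos_of_forall_mulVec_eq_smul (M : Matrix m m ℝ)
    (h : ∀ (t : ℝ) v, M *ᵥ v = t • v → v = 0) : 0 < (-M).det :=
  (det_neg_nonneg_of_forall_pos_mulVec_eq_smul M fun t _ => h t).lt_of_ne <| by
    simpa [eq_comm] using det_smul_one_sub_ne_zero (h 0)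

theorem eq_zero_of_mulVec_eq_smul_of_mul_self_eq_neg_one {M : Matrix m m ℝ} (hM : M * M = -1)
    {t : ℝ} {v : m → ℝ} (hv : M *ᵥ v = t • v) : v = 0 := by
  have hsq : (M * M) *ᵥ v = (t * t) • v := by
    rw [← mulVec_mulVec, hv, mulVec_smul, hv, smul_smul]
  rw [hM, neg_mulVec, one_mulVec] at hsq
  have : (t * t + 1) • v = 0 := by rw [add_smul, one_smul, ← hsq, neg_add_cancel]
  exact (smul_eq_zero.mp this).resolve_left
    (add_pos_of_nonneg_of_pos (mul_self_nonneg t) one_pos).ne'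

theorem det_nonneg_of_mul_self_eq_neg_one_of_transpose_mul_eq_neg {G M : Matrix m m ℝ}
    (hM : M * M = -1) (hGM : (G * M)ᵀ = -(G * M)) : 0 ≤ G.det := by
  have hGM_det : 0 ≤ (-(G * M)).det := det_neg_nonneg_of_forall_pos_mulVec_eq_smul _
    fun _ ht _ => eq_zero_of_mulVec_eq_smul_of_transpose_eq_neg hGM ht.ne'
  have hM_det : 0 < (-M).det := det_neg_pos_of_forall_mulVec_eq_smul _
    fun _ _ => eq_zero_of_mulVec_eq_smul_of_mul_self_eq_neg_one hM
  rw [← mul_neg, det_mul] at hGM_det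
  exact nonneg_of_mul_nonneg_left hGM_det hM_det

end Matrix

namespace LieAlgebra.Orthogonal

theorem neg_one_pow_card_mul_det_jd_pos (l : Type*) [Fintype l] [DecidableEq l] :
    0 < (-1) ^ Fintype.card l * (JD l ℝ).det := by
  -- `jd_transform`: `PDᵀ * JD * PD = 2 • fromBlocks 1 0 0 (-1)`
  have h := congrArg det (jd_transform l ℝ)
  rw [det_mul, det_mul, det_transpose, det_smul, s_as_blocks, det_fromBlocks_zero₂₁, det_one,
    det_neg, det_one, Fintype.card_sum] at h
  have hsq : ((-1 : ℝ) ^ Fintype.card l) ^ 2 = 1 := by rw [← pow_mul, pow_mul', neg_one_sq, one_pow]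
  have : (-1) ^ Fintype.card l * (JD l ℝ).det * (PD l ℝ).det ^ 2 =
      2 ^ (Fintype.card l + Fintype.card l) := by
    linear_combination (-1) ^ Fintype.card l * h + 2 ^ (Fintype.card l + Fintype.card l) * hsq
  exact pos_of_mul_pos_left (by rw [this]; positivity) (sq_nonneg _)

end LieAlgebra.Orthogonal

namespace LinearMap

variable {V ι : Type*} [AddCommGroup V] [Module ℝ V] [Fintype ι] [DecidableEq ι]

theorem transpose_toMatrix₂_compl₂_eq_neg (b : Module.Basis ι ℝ V) {B : LinearMap.BilinForm ℝ V}
    (hB : B.IsSymm) {J : V →ₗ[ℝ] V} (hJ : ∀ x y, B x (J y) + B (J x) y = 0) :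
    (toMatrix₂ b b (B.compl₂ J))ᵀ = -(toMatrix₂ b b (B.compl₂ J)) := by
  ext i j
  simp only [Matrix.transpose_apply, Matrix.neg_apply, toMatrix₂_apply, compl₂_apply]
  linarith [hJ (b i) (b j), hB.eq (J (b i)) (b j)]

theorem det_toMatrix₂_nonneg_of_skew_complexStructure (b : Module.Basis ι ℝ V)
    {B : LinearMap.BilinForm ℝ V} (hB : B.IsSymm) {J : V →ₗ[ℝ] V} (hJ2 : J ∘ₗ J = -LinearMap.id)
    (hJ : ∀ x y, B x (J y) + B (J x) y = 0) : 0 ≤ (toMatrix₂ b b B).det := by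
  refine Matrix.det_nonneg_of_mul_self_eq_neg_one_of_transpose_mul_eq_neg (M := toMatrix b b J)
    ?_ ?_
  · rw [← toMatrix_comp, hJ2, map_neg, toMatrix_id]
  · rw [← toMatrix₂_compl₂]
    exact transpose_toMatrix₂_compl₂_eq_neg b hB hJ

end LinearMap

section NeutralMetric

variable (W : Type*) [AddCommGroup W] [Module ℝ W]

noncomputable def neutralBilin : LinearMap.BilinForm ℝ (W × Module.Dual ℝ W) :=
  LinearMap.mk₂ ℝ (neutralMetric W)
    (fun _ _ _ => by simp [neutralMetric]; ring)
    (fun _ _ _ => by simp [neutralMetric]; ring)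
    (fun _ _ _ => by simp [neutralMetric]; ring)
    (fun _ _ _ => by simp [neutralMetric]; ring)

theorem neutralBilin_apply (p q : W × Module.Dual ℝ W) : neutralBilin W p q = neutralMetric W p q :=
  rfl

theorem isSymm_neutralBilin : (neutralBilin W).IsSymm :=
  ⟨fun p q => by simp only [neutralBilin_apply, neutralMetric, add_comm]⟩

variable {W} in
theorem toMatrix₂_neutralBilin {ι : Type*} [Fintype ι] [DecidableEq ι] (b : Module.Basis ι ℝ W) :
    LinearMap.toMatrix₂ (b.prod b.dualBasis) (b.prod b.dualBasis) (neutralBilin W) =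
      (2⁻¹ : ℝ) • LieAlgebra.Orthogonal.JD ι ℝ := by
  ext (i | i) (j | j) <;> simp [LinearMap.toMatrix₂_apply, neutralBilin_apply, neutralMetric,
    LieAlgebra.Orthogonal.JD, Matrix.one_apply, Finsupp.single_apply, eq_comm, ite_div]

end NeutralMetric

theorem dim_even_of_generalized_complex
    (W : Type*) [AddCommGroup W] [Module ℝ W] [FiniteDimensional ℝ W]
    (J : (W × Module.Dual ℝ W) →ₗ[ℝ] (W × Module.Dual ℝ W))
    (hJ2 : J ∘ₗ J = -LinearMap.id)
    (hskew : ∀ p q : W × Module.Dual ℝ W,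
      neutralMetric W p (J q) + neutralMetric W (J p) q = 0) :
    Even (Module.finrank ℝ W) := by
  set n := Module.finrank ℝ W
  let b := Module.finBasis ℝ W
  have hG := LinearMap.det_toMatrix₂_nonneg_of_skew_complexStructure (b.prod b.dualBasis)
    (isSymm_neutralBilin W) hJ2 hskew
  rw [toMatrix₂_neutralBilin, Matrix.det_smul] at hG
  have hJD := LieAlgebra.Orthogonal.neg_one_pow_card_mul_det_jd_pos (Fin n)
  rw [Fintype.card_fin] at hJD
  have : 0 < (-1 : ℝ) ^ n :=
    pos_of_mul_pos_left hJD (nonneg_of_mul_nonneg_right hG (by positivity))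
  refine (Nat.even_or_odd n).resolve_right fun hodd => ?_
  rw [hodd.neg_one_pow] at this
  norm_num at this
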